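/- Let c : darts → ℝ be a dart cost function, let c' be its lexicographic perturbation, and let μ and b be dart capacity and vertex demand functions. If a minimum-cost feasible flow with respect to c', μ, and b exists, then it is unique, and it is also a minimum-cost feasible flow with respect to the unperturbed costs c. -/

import Mathlib

/-!
Common combinatorial framework for graphs cellularly embedded on orientable surfaces,
following Erickson, Fox, and Lkhamsuren, "Holiest Minimum-Cost Paths and Flows in
Surface Graphs".

A graph `G = (V, E, F)` embedded on an orientable surface is given combinatorially by a
finite set of darts together with a fixed-point-free involution `rev` (whose orbits are
the edges) and a permutation `next` (= π, whose orbits are the vertices); the faces are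
the orbits of `rev ∘ next`, and the genus `g` is determined by Euler's formula
`|V| - |E| + |F| = 2 - 2g`.
-/

noncomputable section

open Finset

open scoped Classical

set_option maxHeartbeats 1000000

structure CombSurface where
  /-- the darts -/
  D : Type
  /-- the vertices (orbits of `next`) -/
  V : Type
  /-- the faces (orbits of `rev ∘ next`) -/
  F : Type
  [finD : Fintype D]
  [deqD : DecidableEq D]
  [finV : Fintype V]
  [deqV : DecidableEq V]
  [finF : Fintype F]
  [deqF : DecidableEq F]
  /-- the reversal involution on darts; its orbits are the edges -/
  rev : D → D
  rev_invol : ∀ d, rev (rev d) = d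
  rev_ne : ∀ d, rev d ≠ d
  /-- the rotation permutation π: orbits are the darts directed into a common vertex,
  in counterclockwise order -/
  next : D → D
  next_bij : Function.Bijective next
  /-- the head of a dart: the orbit map of `next` -/
  head : D → V
  head_next : ∀ d, head (next d) = head d
  head_orbit : ∀ d₁ d₂, head d₁ = head d₂ → ∃ n : ℕ, next^[n] d₁ = d₂
  head_surj : Function.Surjective head
  /-- the face to the left of a dart: the orbit map of `rev ∘ next` -/
  left : D → F
  left_step : ∀ d, left (rev (next d)) = left d
  left_orbit : ∀ d₁ d₂, left d₁ = left d₂ → ∃ n : ℕ, (fun x => rev (next x))^[n] d₁ = d₂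
  left_surj : Function.Surjective left
  /-- the genus -/
  g : ℕ
  /-- Euler's formula `|V| - |E| + |F| = 2 - 2g` (with `2|E| = |D|`) -/
  euler : 2 * (Fintype.card V : ℤ) + 2 * (Fintype.card F : ℤ) - (Fintype.card D : ℤ)
      = 4 - 4 * (g : ℤ)

attribute [instance] CombSurface.finD CombSurface.deqD CombSurface.finV
  CombSurface.deqV CombSurface.finF CombSurface.deqF

namespace CombSurface

variable (S : CombSurface)

/-- The tail of a dart. -/
def tail (d : S.D) : S.V := S.head (S.rev d)

/-- The face to the right of a dart.  The dual dart of `d` crosses `d` from the face on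
its left to the face on its right; i.e. the dual dart of `d` has tail `S.left d` and
head `S.right d`. -/
def right (d : S.D) : S.F := S.left (S.rev d)

/-- The imbalance of a flow `f` at a vertex `v`: the net flow into `v`. -/
def imbalance (f : S.D → ℝ) (v : S.V) : ℝ :=
  ∑ d ∈ univ.filter (fun d => S.head d = v), f d -
    ∑ d ∈ univ.filter (fun d => S.tail d = v), f d

/-- `f` is the boundary flow of the potential function `α` on the faces. -/
def IsBoundary (f : S.D → ℝ) (α : S.F → ℝ) : Prop :=
  ∀ d, f d - f (S.rev d) = α (S.right d) - α (S.left d)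

/-- The dual imbalance of a dual flow `z` at a face `p`: the sum of `z` over all darts
whose dual darts have head `p`. -/
def dualImbalance (z : S.D → ℝ) (p : S.F) : ℝ :=
  ∑ d ∈ univ.filter (fun d => S.right d = p), z d

/-- A drainage with sink `r`: an antisymmetric dual flow whose dual imbalance is negative
at every face other than `r`. -/
def IsDrainage (z : S.D → ℝ) (r : S.F) : Prop :=
  (∀ d, z (S.rev d) = - z d) ∧ ∀ q, q ≠ r → S.dualImbalance z q < 0

/-- A set of darts closed under reversal (i.e. a set of edges). -/
def RevClosed (A : Finset S.D) : Prop := ∀ d ∈ A, S.rev d ∈ A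

/-- The edge set `A` connects all vertices of the primal graph. -/
def PrimalConnected (A : Finset S.D) : Prop :=
  ∀ v w : S.V, Relation.ReflTransGen (fun a b => ∃ d ∈ A, S.tail d = a ∧ S.head d = b) v w

/-- The edge set `A` connects all vertices of the dual graph (i.e. the faces). -/
def DualConnected (A : Finset S.D) : Prop :=
  ∀ p q : S.F, Relation.ReflTransGen (fun a b => ∃ d ∈ A, S.left d = a ∧ S.right d = b) p q

/-- A spanning tree of `G`: a connected spanning set of edges with `|V| - 1` edges. -/
def IsSpanningTree (A : Finset S.D) : Prop :=
  S.RevClosed A ∧ S.PrimalConnected A ∧ A.card = 2 * (Fintype.card S.V - 1)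

/-- A spanning cotree of `G`: a set of edges forming a spanning tree of the dual graph. -/
def IsSpanningCotree (A : Finset S.D) : Prop :=
  S.RevClosed A ∧ S.DualConnected A ∧ A.card = 2 * (Fintype.card S.F - 1)

/-- The clockwise neighborhood `∂⁻(F')` of a set of faces: all darts whose dual darts
have tail outside `F'` and head inside `F'`. -/
def cwBoundary (F' : Finset S.F) : Finset S.D :=
  univ.filter fun d => S.left d ∉ F' ∧ S.right d ∈ F'

end CombSurface

/-- A tree–cotree decomposition of `G`: a partition of the edges into a spanning tree `T`,
a spanning cotree `C`, and a set `L` of leftover edges. -/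
structure TreeCotree (S : CombSurface) where
  T : Finset S.D
  L : Finset S.D
  C : Finset S.D
  tree : S.IsSpanningTree T
  cotree : S.IsSpanningCotree C
  revL : S.RevClosed L
  disjTL : Disjoint T L
  disjTC : Disjoint T C
  disjLC : Disjoint L C
  cover : T ∪ L ∪ C = Finset.univ

/-- Homology signature data: a tree–cotree decomposition `(T, L, C)` together with an
ordering `ell 1, …, ell 2g` of (oriented) leftover edges of `L` and, for each `i`, the
oriented dual fundamental cycle `cyc i` of the edge of `ell i` with the cotree `C`,
represented as the `{-1,0,1}`-valued dual circulation supported on `C + ell i` that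
traverses the dart `ell i` (positively).  The homology signature of a dart `d` is the
integer vector `[d] = fun i => cyc i d`. -/
structure HomologyBasis (S : CombSurface) extends TreeCotree S where
  /-- the `i`-th leftover edge, oriented -/
  ell : Fin (2 * S.g) → S.D
  ell_mem : ∀ i, ell i ∈ L
  ell_inj : ∀ i j, (ell i = ell j ∨ ell i = S.rev (ell j)) → i = j
  ell_cover : ∀ d ∈ L, ∃ i, d = ell i ∨ d = S.rev (ell i)
  /-- the oriented dual fundamental cycle of `ell i` with the cotree `C`,
  as a dual circulation -/
  cyc : Fin (2 * S.g) → S.D → ℤ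
  cyc_antisym : ∀ i d, cyc i (S.rev d) = - cyc i d
  cyc_le_one : ∀ i d, |cyc i d| ≤ 1
  cyc_circ : ∀ i p, (∑ d ∈ univ.filter (fun d => S.right d = p), cyc i d) = 0
  cyc_supp : ∀ i d, cyc i d ≠ 0 → d ∈ C ∨ d = ell i ∨ d = S.rev (ell i)
  cyc_ell : ∀ i, cyc i (ell i) = 1

/-- The homology signature `[f]` of a flow `f`: `[f] = ∑ d, f d • [d]`. -/
def flowSig (S : CombSurface) (H : HomologyBasis S) (f : S.D → ℝ) : Fin (2 * S.g) → ℝ :=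
  fun i => ∑ d, f d * (H.cyc i d : ℝ)

/-- Strict lexicographic comparison of cost vectors. -/
def lexLt {n : ℕ} (a b : Fin n → ℝ) : Prop :=
  ∃ i, (∀ j, j < i → a j = b j) ∧ a i < b i

/-- Lexicographic comparison of cost vectors. -/
def lexLe {n : ℕ} (a b : Fin n → ℝ) : Prop := lexLt a b ∨ a = b

/-- The perturbed cost of a dart under the full lexicographic perturbation scheme:
`c'(d) = (c(d), 1) ++ [d] ++ (z(d))`. -/
def dartCostFull (S : CombSurface) (H : HomologyBasis S) (z : S.D → ℝ) (c : S.D → ℝ)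
    (d : S.D) : Fin (2 * S.g + 3) → ℝ :=
  Fin.cons (c d) (Fin.cons 1 (Fin.snoc (fun i => (H.cyc i d : ℝ)) (z d)))

/-- The perturbed cost of a dart under the modified lexicographic perturbation scheme
(no `+1` component): `c'(d) = (c(d)) ++ [d] ++ (z(d))`. -/
def dartCostMod (S : CombSurface) (H : HomologyBasis S) (z : S.D → ℝ) (c : S.D → ℝ)
    (d : S.D) : Fin (2 * S.g + 2) → ℝ :=
  Fin.cons (c d) (Fin.snoc (fun i => (H.cyc i d : ℝ)) (z d))

/-- The perturbed cost of a flow: `c'(f) = ∑ d, f d • c'(d)`. -/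
def flowCostFull (S : CombSurface) (H : HomologyBasis S) (z : S.D → ℝ) (c : S.D → ℝ)
    (f : S.D → ℝ) : Fin (2 * S.g + 3) → ℝ :=
  ∑ d, f d • dartCostFull S H z c d

/-- The unperturbed part of a cost vector from the modified scheme (first component). -/
def basePart {g : ℕ} (w : Fin (2 * g + 2) → ℝ) : ℝ := w ⟨0, by omega⟩

/-- The homology part of a cost vector from the modified scheme (middle `2g` components). -/
def homPart {g : ℕ} (w : Fin (2 * g + 2) → ℝ) : Fin (2 * g) → ℝ :=
  fun i => w ⟨(i : ℕ) + 1, by have := i.isLt; omega⟩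

/-- The face part of a cost vector from the modified scheme (last component). -/
def facePart {g : ℕ} (w : Fin (2 * g + 2) → ℝ) : ℝ := w ⟨2 * g + 1, by omega⟩

/-- Feasibility of a flow with respect to dart capacities `μ` and vertex demands `b`. -/
def Feasible (S : CombSurface) (μ : S.D → ENNReal) (b : S.V → ℝ) (f : S.D → ℝ) : Prop :=
  (∀ d, 0 ≤ f d ∧ ENNReal.ofReal (f d) ≤ μ d) ∧ ∀ v, S.imbalance f v = b v

/-- A minimum-cost feasible flow with respect to the perturbed costs `c'`, capacities `μ`,
and demands `b`, where costs are compared lexicographically. -/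
def IsMinCostFlow (S : CombSurface) (H : HomologyBasis S) (z : S.D → ℝ) (c : S.D → ℝ)
    (μ : S.D → ENNReal) (b : S.V → ℝ) (f : S.D → ℝ) : Prop :=
  Feasible S μ b f ∧ ∀ f', Feasible S μ b f' →
    lexLe (flowCostFull S H z c f) (flowCostFull S H z c f')

/-- `IsWalk S s t P`: the list of darts `P` is a directed walk from `s` to `t`. -/
def IsWalk (S : CombSurface) : S.V → S.V → List S.D → Prop
  | s, t, [] => s = t
  | s, t, d :: P => S.tail d = s ∧ IsWalk S (S.head d) t P

/-- `IsDualWalk S p q P`: the list of darts `P` is a directed walk from face `p` to face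
`q` in the dual graph. -/
def IsDualWalk (S : CombSurface) : S.F → S.F → List S.D → Prop
  | p, q, [] => p = q
  | p, q, d :: P => S.left d = p ∧ IsDualWalk S (S.right d) q P

/-- The cost vector of a walk: the sum of the cost vectors of its darts. -/
def pathCost {n : ℕ} (S : CombSurface) (cp : S.D → Fin n → ℝ) (P : List S.D) :
    Fin n → ℝ :=
  (P.map cp).sum

/-- `P` is a lexicographically shortest directed walk from `s` to `t` with respect to the
vector-valued dart costs `cp`. -/
def IsShortestWalk {n : ℕ} (S : CombSurface) (cp : S.D → Fin n → ℝ) (s t : S.V)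
    (P : List S.D) : Prop :=
  IsWalk S s t P ∧ ∀ Q, IsWalk S s t Q → lexLe (pathCost S cp P) (pathCost S cp Q)

/-- A list of darts viewed as a flow: each dart receives the number of times it occurs. -/
def listFlow (S : CombSurface) (P : List S.D) : S.D → ℝ := fun d => (P.count d : ℝ)

/-- The parent map of a spanning cotree rooted at `r`, given the successor darts. -/
def parentOfSucc (S : CombSurface) (r : S.F) (succ : S.F → S.D) (p : S.F) : S.F :=
  if p = r then r else S.right (succ p)

/-- The descendants of a face `p` in the cotree rooted at `r` (including `p` itself). -/
def descendants (S : CombSurface) (r : S.F) (succ : S.F → S.D) (p : S.F) :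
    Finset S.F :=
  univ.filter fun o => ∃ m : ℕ, (parentOfSucc S r succ)^[m] o = p

/-- The dual flow sending one unit of flow from every face to `r` along the cotree:
on a successor dart `succ p` its value is the number of descendants of `p`, on the
reversal of a successor dart it is the negation of that number, and on darts whose edges
are not in the cotree it is `0`. -/
def treeDrainage (S : CombSurface) (r : S.F) (succ : S.F → S.D) (d : S.D) : ℝ :=
  if ∃ p, p ≠ r ∧ succ p = d then ((descendants S r succ (S.left d)).card : ℝ)
  else if ∃ p, p ≠ r ∧ succ p = S.rev d then
    -((descendants S r succ (S.left (S.rev d))).card : ℝ)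
  else 0

/-- `RedOf S pred v u x`: in the tree rooted at `v` with predecessor darts `pred`, the
tree path from `v` to `x` passes through `u` (when `pred u` is the dart `v→u`, this says
exactly that the tree path from `v` to `x` uses the dart `v→u`, i.e. `x` is red). -/
def RedOf (S : CombSurface) (pred : S.V → S.D) (v u x : S.V) : Prop :=
  ∃ m : ℕ, (fun y => if y = v then v else S.tail (pred y))^[m] x = u

/-- The darts of the tree determined by the predecessor darts `pred` (both orientations
of each tree edge). -/
def predDarts (S : CombSurface) (pred : S.V → S.D) (v : S.V) : Set S.D :=
  {d | ∃ x, x ≠ v ∧ (pred x = d ∨ pred x = S.rev d)}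

/-- A shortest path tree rooted at `v` with respect to vector-valued dart costs `cost`,
together with the (lexicographic) shortest path distances: every non-root vertex has a
tense predecessor dart, all darts have non-negative slack, and the predecessor darts form
a tree reaching back to the root. -/
structure SPTree (S : CombSurface) {n : ℕ} (cost : S.D → Fin n → ℝ) (v : S.V) where
  pred : S.V → S.D
  dist : S.V → Fin n → ℝ
  dist_root : dist v = 0
  pred_head : ∀ x, x ≠ v → S.head (pred x) = x
  pred_tense : ∀ x, x ≠ v → dist x = dist (S.tail (pred x)) + cost (pred x)
  slack_nonneg : ∀ d, lexLe (dist (S.head d)) (dist (S.tail d) + cost d)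
  reach : ∀ x, ∃ m : ℕ, (fun y => if y = v then v else S.tail (pred y))^[m] x = v

namespace SPTree

variable {S : CombSurface} {n : ℕ} {cost : S.D → Fin n → ℝ} {v : S.V}

/-- The slack of a dart: `slack(x→y) = dist(x) + cost(x→y) − dist(y)`. -/
def slack (T : SPTree S cost v) (d : S.D) : Fin n → ℝ :=
  T.dist (S.tail d) + cost d - T.dist (S.head d)

/-- A vertex `x` is red if the tree path from the root `v` to `x` uses the dart `v→u`;
here `u` is the head of that dart. -/
def Red (T : SPTree S cost v) (u x : S.V) : Prop := RedOf S T.pred v u x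

/-- A dart is active if its tail is blue and its head is red. -/
def Active (T : SPTree S cost v) (u : S.V) (d : S.D) : Prop :=
  ¬ T.Red u (S.tail d) ∧ T.Red u (S.head d)

/-- The darts of the shortest path tree (both orientations of each tree edge). -/
def treeDarts (T : SPTree S cost v) : Set S.D := predDarts S T.pred v

end SPTree

/-- `K` realizes the fundamental cycle of the dart `d` with the tree whose darts are
`TD`: the concatenation `d :: K` is a simple closed walk whose non-`d` darts all lie in
the tree. -/
def IsFundCycleWalk (S : CombSurface) (TD : Set S.D) (d : S.D) (K : List S.D) : Prop :=
  IsWalk S (S.head d) (S.tail d) K ∧ (∀ e ∈ K, e ∈ TD) ∧ ((d :: K).map S.head).Nodup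

/-- The homology signature of the fundamental cycle `d :: K`. -/
def cycleSig (S : CombSurface) (H : HomologyBasis S) (d : S.D) (K : List S.D) :
    Fin (2 * S.g) → ℝ :=
  fun i => (H.cyc i d : ℝ) + (K.map fun e => (H.cyc i e : ℝ)).sum

/-- `Y` is a subgraph of the cut graph `X` in which every incident dual vertex other than
`q` and `r` has degree at least 2. -/
def IsCore (S : CombSurface) (X : Set S.D) (q r : S.F) (Y : Set S.D) : Prop :=
  Y ⊆ X ∧ (∀ d ∈ Y, S.rev d ∈ Y) ∧
    ∀ d ∈ Y, S.left d ≠ q → S.left d ≠ r → ∃ d' ∈ Y, d' ≠ d ∧ S.left d' = S.left d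

/-- The 2-core of the cut graph `X` (keeping `q` and `r`): the largest subgraph in which
every dual vertex other than `q` and `r` has degree at least 2; equivalently, the result
of repeatedly deleting degree-1 dual vertices other than `q` and `r`. -/
def twoCore (S : CombSurface) (X : Set S.D) (q r : S.F) : Set S.D :=
  ⋃₀ {Y | IsCore S X q r Y}

/-- An oriented cut path of the 2-core `X2`: a directed dual path whose darts lie in `X2`
and whose internal dual vertices are not `q` or `r` and have degree exactly 2 in `X2`. -/
def IsCutPath (S : CombSurface) (X2 : Set S.D) (q r : S.F) (P : List S.D) : Prop :=
  (∀ d ∈ P, d ∈ X2) ∧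
    P.Chain' fun d₁ d₂ => S.right d₁ = S.left d₂ ∧ S.right d₁ ≠ q ∧ S.right d₁ ≠ r ∧
      ∀ e ∈ X2, S.left e = S.right d₁ → e = S.rev d₁ ∨ e = d₂

/-- `L` is the clockwise facial walk around the face `p` (cyclically closed). -/
def IsFacialCycle (S : CombSurface) (p : S.F) (L : List S.D) : Prop :=
  L ≠ [] ∧ (∀ d ∈ L, S.left d = p) ∧
    List.Chain' (fun d₁ d₂ => d₂ = S.rev (S.next d₁)) (L ++ L.take 1)

/-- Elementary combinatorial homotopy moves in the surface punctured at the faces `o` and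
`r`, where the first endpoint of a walk may additionally slide forward or backward along
the fixed walk `R` (the walk `u₁→u₂→⋯→u_{k-1}`): removal/insertion of a spur, exchanging
two arcs that together bound a face other than `o` and `r`, and sliding the initial
endpoint along `R`. -/
inductive RHStep (S : CombSurface) (o r : S.F) (R : List S.D) :
    List S.D → List S.D → Prop where
  | spur (P Q : List S.D) (d : S.D) :
      RHStep S o r R (P ++ d :: S.rev d :: Q) (P ++ Q)
  | face (P Q A B : List S.D) (p : S.F) (hpo : p ≠ o) (hpr : p ≠ r)
      (hface : IsFacialCycle S p (A ++ (B.reverse.map S.rev))) :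
      RHStep S o r R (P ++ A ++ Q) (P ++ B ++ Q)
  | slide (P : List S.D) (d : S.D) (hd : d ∈ R) :
      RHStep S o r R (d :: P) P

/-- Restricted homotopy of walks with respect to a dart whose left face is `o`: homotopy
in the surface punctured at `o` and `r`, where the first endpoint may move forward or
backward along the walk `R`. -/
def RHomotopic (S : CombSurface) (o r : S.F) (R : List S.D) (P₁ P₂ : List S.D) : Prop :=
  Relation.EqvGen (RHStep S o r R) P₁ P₂

/-!
If `f` and `f'` are both minimum-cost, every circulation supported where they differ can be added
to their midpoint with a small coefficient of either sign, so it has zero perturbed cost. Applied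
to `h = f' - f` itself this kills the homology signature of `h`, so (tree–cotree decomposition)
`h - h ∘ rev` is the boundary of a face potential `α`. If `α` is not constant, the faces above its
minimum carry a circulation inside the support of `h` whose drainage component is the total dual
imbalance of that set of faces, which is nonzero. So `α` is constant and `h` is symmetric; then the
unit flow on both darts of an edge in its support has nonzero `+1` component.
-/

open Filter Topology

section DartTree

variable {D X : Type*} {rv : D → D} {hd tl : D → X}

/-- With at most `|W| - 1` edges (`card_le`) connecting `W`, the darts `A` form a spanning tree. -/
structure IsDartTree (rv : D → D) (hd tl : D → X) (A : Finset D) (W : Finset X) : Prop where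
  rev_mem : ∀ d ∈ A, rv d ∈ A
  head_mem : ∀ d ∈ A, hd d ∈ W
  connected : ∀ p ∈ W, ∀ q ∈ W,
    Relation.ReflTransGen (fun a b => ∃ d ∈ A, tl d = a ∧ hd d = b) p q
  card_le : A.card + 2 ≤ 2 * W.card

namespace IsDartTree

variable {A : Finset D} {W : Finset X}

theorem exists_leaf (hT : IsDartTree rv hd tl A W) (htl : ∀ d, tl d = hd (rv d))
    (hA : A.Nonempty) : ∃ v ∈ W, ∃ d₀ ∈ A, hd d₀ = v ∧ ∀ d ∈ A, hd d = v → d = d₀ := by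
  have hW2 : 2 ≤ W.card := by
    have := card_pos.mpr hA
    have := hT.card_le
    omega
  have hdeg : ∀ v ∈ W, 1 ≤ (A.filter (hd · = v)).card := by
    intro v hv
    obtain ⟨x, hx, y, hy, hxy⟩ := one_lt_card.mp hW2
    obtain ⟨u, huW, huv⟩ : ∃ u ∈ W, u ≠ v := by
      rcases eq_or_ne x v with rfl | hxv
      · exact ⟨y, hy, fun h => hxy h.symm⟩
      · exact ⟨x, hx, hxv⟩
    rcases (hT.connected v hv u huW).cases_head with heq | ⟨_, ⟨d, hdA, htld, _⟩, _⟩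
    · exact absurd heq.symm huv
    · exact card_pos.mpr ⟨rv d, mem_filter.mpr ⟨hT.rev_mem d hdA, by rw [← htl, htld]⟩⟩
  obtain ⟨v, hv, hle⟩ : ∃ v ∈ W, (A.filter (hd · = v)).card ≤ 1 := by
    by_contra! hcon
    have hsum : ∑ v ∈ W, (A.filter (hd · = v)).card = A.card :=
      (card_eq_sum_card_fiberwise hT.head_mem).symm
    have := card_nsmul_le_sum W _ 2 hcon
    have := hT.card_le
    simp only [smul_eq_mul] at *
    omega
  obtain ⟨d₀, hd₀⟩ := card_eq_one.mp (le_antisymm hle (hdeg v hv))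
  obtain ⟨hmem, huniq⟩ := eq_singleton_iff_unique_mem.mp hd₀
  exact ⟨v, hv, d₀, (mem_filter.mp hmem).1, (mem_filter.mp hmem).2,
    fun d hdA hhd => huniq d (mem_filter.mpr ⟨hdA, hhd⟩)⟩

section Leaf

variable {v : X} {d₀ : D}

theorem tail_ne_of_leaf (hAr : ∀ d ∈ A, rv d ∈ A) (hne : ∀ d, rv d ≠ d)
    (htl : ∀ d, tl d = hd (rv d)) (hd₀ : d₀ ∈ A) (hu : ∀ d ∈ A, hd d = v → d = d₀) :
    tl d₀ ≠ v := fun h => hne d₀ (hu (rv d₀) (hAr d₀ hd₀) (by rw [← htl, h]))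

theorem reflTransGen_erase_leaf (hrv : Function.Involutive rv) (htl : ∀ d, tl d = hd (rv d))
    (hAr : ∀ d ∈ A, rv d ∈ A) (hhd₀ : hd d₀ = v) (hu : ∀ d ∈ A, hd d = v → d = d₀)
    (hv : tl d₀ ≠ v) {p q : X}
    (hpq : Relation.ReflTransGen (fun a b => ∃ d ∈ A, tl d = a ∧ hd d = b) p q) :
    Relation.ReflTransGen (fun a b => ∃ d ∈ (A.erase d₀).erase (rv d₀), tl d = a ∧ hd d = b)
      (if p = v then tl d₀ else p) (if q = v then tl d₀ else q) := by
  induction hpq with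
  | refl => exact .refl
  | @tail b c _ hbc ih =>
    obtain ⟨d, hdA, rfl, rfl⟩ := hbc
    by_cases h1 : d = d₀
    · subst h1
      simpa [hhd₀, hv] using ih
    by_cases h2 : d = rv d₀
    · subst h2
      rw [show tl (rv d₀) = v by rw [htl, hrv, hhd₀], if_pos rfl] at ih
      rwa [← htl, if_neg hv]
    · have hbv : tl d ≠ v := fun hb =>
        h2 (by rw [← hu (rv d) (hAr d hdA) (by rw [← htl, hb]), hrv])
      have hcv : hd d ≠ v := fun hc => h1 (hu d hdA hc)
      rw [if_neg hbv] at ih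
      rw [if_neg hcv]
      exact ih.tail ⟨d, mem_erase.mpr ⟨h2, mem_erase.mpr ⟨h1, hdA⟩⟩, rfl, rfl⟩

theorem erase_leaf (hT : IsDartTree rv hd tl A W) (hrv : Function.Involutive rv)
    (htl : ∀ d, tl d = hd (rv d)) (hvW : v ∈ W) (hd₀ : d₀ ∈ A) (hhd₀ : hd d₀ = v)
    (hu : ∀ d ∈ A, hd d = v → d = d₀) (hv : tl d₀ ≠ v) :
    IsDartTree rv hd tl ((A.erase d₀).erase (rv d₀)) (W.erase v) := by
  have hrd₀ : rv d₀ ∈ A.erase d₀ :=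
    mem_erase.mpr ⟨fun h => hv (by rw [htl, h, hhd₀]), hT.rev_mem d₀ hd₀⟩
  refine ⟨fun d hd => ?_, fun d hd => ?_, fun p hp q hq => ?_, ?_⟩
  · simp only [mem_erase] at hd ⊢
    refine ⟨fun h => hd.2.1 ?_, fun h => hd.1 ?_, hT.rev_mem d hd.2.2⟩
    · rw [← hrv d, h, hrv]
    · rw [← hrv d, h]
  · simp only [mem_erase] at hd ⊢
    exact ⟨fun h => hd.2.1 (hu d hd.2.2 h), hT.head_mem d hd.2.2⟩
  · rw [mem_erase] at hp hq
    simpa [hp.1, hq.1] using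
      reflTransGen_erase_leaf hrv htl hT.rev_mem hhd₀ hu hv (hT.connected p hp.2 q hq.2)
  · have := hT.card_le
    have := card_pos.mpr ⟨v, hvW⟩
    have := card_pos.mpr ⟨_, hrd₀⟩
    rw [card_erase_of_mem hd₀] at this
    rw [card_erase_of_mem hrd₀, card_erase_of_mem hd₀, card_erase_of_mem hvW]
    omega

end Leaf

theorem exists_potential (hT : IsDartTree rv hd tl A W) (hrv : Function.Involutive rv)
    (hne : ∀ d, rv d ≠ d) (htl : ∀ d, tl d = hd (rv d)) (w : D → ℝ)
    (hw : ∀ d, w (rv d) = - w d) : ∃ α : X → ℝ, ∀ d ∈ A, α (hd d) - α (tl d) = w d := by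
  induction hn : W.card generalizing A W with
  | zero => have := hT.card_le; omega
  | succ n ih =>
    rcases A.eq_empty_or_nonempty with rfl | hA
    · exact ⟨0, by simp⟩
    obtain ⟨v, hvW, d₀, hd₀, hhd₀, hu⟩ := hT.exists_leaf htl hA
    have hv := tail_ne_of_leaf hT.rev_mem hne htl hd₀ hu
    obtain ⟨α, hα⟩ := ih (hT.erase_leaf hrv htl hvW hd₀ hhd₀ hu hv)
      (by rw [card_erase_of_mem hvW, hn]; rfl)
    refine ⟨Function.update α v (α (tl d₀) + w d₀), fun d hdA => ?_⟩
    by_cases h1 : d = d₀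
    · subst h1
      rw [hhd₀, Function.update_self, Function.update_of_ne hv]
      ring
    by_cases h2 : d = rv d₀
    · subst h2
      rw [← htl, show tl (rv d₀) = v by rw [htl, hrv, hhd₀], Function.update_of_ne hv,
        Function.update_self, hw]
      ring
    · have hh : hd d ≠ v := fun h => h1 (hu d hdA h)
      have ht : tl d ≠ v := fun h =>
        h2 (by rw [← hu (rv d) (hT.rev_mem d hdA) (by rw [← htl, h]), hrv])
      rw [Function.update_of_ne hh, Function.update_of_ne ht]
      exact hα d (mem_erase.mpr ⟨h2, mem_erase.mpr ⟨h1, hdA⟩⟩)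

end IsDartTree

theorem sum_comp_mul_fiberwise [Fintype D] [Fintype X] [DecidableEq X] (g : D → X)
    (β : X → ℝ) (κ : D → ℝ) : ∑ d, β (g d) * κ d = ∑ x, β x * ∑ d with g d = x, κ d := by
  rw [← sum_fiberwise univ g (fun d => β (g d) * κ d)]
  refine sum_congr rfl fun x _ => ?_
  rw [mul_sum]
  exact sum_congr rfl fun d hd => by rw [(mem_filter.mp hd).2]

theorem sum_sub_comp_mul [Fintype D] (hrv : Function.Involutive rv) (htl : ∀ d, tl d = hd (rv d))
    (β : X → ℝ) {κ : D → ℝ} (hκ : ∀ d, κ (rv d) = - κ d) :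
    ∑ d, (β (hd d) - β (tl d)) * κ d = 2 * ∑ d, β (hd d) * κ d := by
  have : ∑ d, β (tl d) * κ d = - ∑ d, β (hd d) * κ d := by
    rw [Fintype.sum_equiv (Function.Involutive.toPerm rv hrv) _ (fun d => β (hd d) * κ (rv d))
      (fun d => by simp [htl, hrv d])]
    simp [hκ]
  simp only [sub_mul, sum_sub_distrib, this]
  ring

/-- Pairing a balanced antisymmetric function supported on the tree with a potential of itself
gives its sum of squares, which therefore vanishes. -/
theorem IsDartTree.eq_zero_of_balanced [Fintype D] [Fintype X] [DecidableEq X] {A : Finset D}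
    {W : Finset X} (hT : IsDartTree rv hd tl A W) (hrv : Function.Involutive rv)
    (hne : ∀ d, rv d ≠ d) (htl : ∀ d, tl d = hd (rv d)) {δ : D → ℝ} (hδ : ∀ d, δ (rv d) = - δ d)
    (hbal : ∀ x, ∑ d with hd d = x, δ d = 0) (hsupp : ∀ d, δ d ≠ 0 → d ∈ A) : δ = 0 := by
  obtain ⟨β, hβ⟩ := hT.exists_potential hrv hne htl δ hδ
  have hsq : ∑ d, δ d ^ 2 = 0 := by
    calc ∑ d, δ d ^ 2 = ∑ d, (β (hd d) - β (tl d)) * δ d := by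
          refine sum_congr rfl fun d _ => ?_
          by_cases hd0 : δ d = 0
          · simp [hd0]
          · rw [hβ d (hsupp d hd0)]; ring
      _ = 2 * ∑ x, β x * ∑ d with hd d = x, δ d := by
          rw [sum_sub_comp_mul hrv htl β hδ, sum_comp_mul_fiberwise]
      _ = 0 := by simp [hbal]
  funext d
  exact pow_eq_zero_iff two_ne_zero |>.mp
    ((sum_eq_zero_iff_of_nonneg fun d _ => sq_nonneg (δ d)).mp hsq d (mem_univ d))

end DartTree

namespace CombSurface

variable (S : CombSurface)

theorem rev_involutive : Function.Involutive S.rev := S.rev_invol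

theorem right_rev (d : S.D) : S.right (S.rev d) = S.left d := by
  rw [right, S.rev_invol]

theorem sum_comp_rev_mul (f : S.D → ℝ) {κ : S.D → ℝ} (hκ : ∀ d, κ (S.rev d) = - κ d) :
    ∑ d, f (S.rev d) * κ d = - ∑ d, f d * κ d := by
  rw [Fintype.sum_equiv S.rev_involutive.toPerm _ (fun d => f d * κ (S.rev d))
    (fun d => by simp [S.rev_invol])]
  simp [hκ]

theorem sum_sub_rev_mul (f : S.D → ℝ) {κ : S.D → ℝ} (hκ : ∀ d, κ (S.rev d) = - κ d) :
    ∑ d, (f d - f (S.rev d)) * κ d = 2 * ∑ d, f d * κ d := by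
  simp only [sub_mul, sum_sub_distrib, S.sum_comp_rev_mul f hκ]
  ring

theorem imbalance_eq_sum_head (f : S.D → ℝ) (v : S.V) :
    S.imbalance f v = ∑ d with S.head d = v, (f d - f (S.rev d)) := by
  rw [imbalance, sum_sub_distrib]
  congr 1
  exact sum_equiv S.rev_involutive.toPerm (fun d => by
    simp only [mem_filter, mem_univ, true_and, Function.Involutive.coe_toPerm]; rfl)
    (by simp [S.rev_invol])

theorem imbalance_add (f g : S.D → ℝ) (v : S.V) :
    S.imbalance (f + g) v = S.imbalance f v + S.imbalance g v := by
  simp only [imbalance, Pi.add_apply, sum_add_distrib]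
  ring

theorem imbalance_sub (f g : S.D → ℝ) (v : S.V) :
    S.imbalance (f - g) v = S.imbalance f v - S.imbalance g v := by
  simp only [imbalance, Pi.sub_apply, sum_sub_distrib]
  ring

theorem imbalance_smul (s : ℝ) (f : S.D → ℝ) (v : S.V) :
    S.imbalance (s • f) v = s * S.imbalance f v := by
  simp only [imbalance, Pi.smul_apply, smul_eq_mul, ← mul_sum]
  ring

/-- Rotating by `next` around `v` maps each dart into `v` to one whose right face is the left face
of the first. -/
theorem sum_head_boundary (α : S.F → ℝ) (v : S.V) :
    ∑ d with S.head d = v, (α (S.right d) - α (S.left d)) = 0 := by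
  rw [sum_sub_distrib, sub_eq_zero]
  exact (sum_equiv (Equiv.ofBijective S.next S.next_bij) (by simp [S.head_next])
    (fun d _ => by simp [right, S.left_step])).symm

theorem imbalance_eq_zero_of_isBoundary {f : S.D → ℝ} {α : S.F → ℝ} (hf : S.IsBoundary f α)
    (v : S.V) : S.imbalance f v = 0 := by
  rw [imbalance_eq_sum_head, ← S.sum_head_boundary α v]
  exact sum_congr rfl fun d _ => hf d

theorem sum_boundary_mul (β : S.F → ℝ) {κ : S.D → ℝ} (hκ : ∀ d, κ (S.rev d) = - κ d) :
    ∑ d, (β (S.right d) - β (S.left d)) * κ d = 2 * ∑ p, β p * S.dualImbalance κ p := by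
  rw [sum_sub_comp_mul S.rev_involutive (fun d => (S.right_rev d).symm) β hκ,
    sum_comp_mul_fiberwise]
  rfl

theorem sum_mul_of_isBoundary {f : S.D → ℝ} {β : S.F → ℝ} (hf : S.IsBoundary f β)
    {κ : S.D → ℝ} (hκ : ∀ d, κ (S.rev d) = - κ d) :
    ∑ d, f d * κ d = ∑ p, β p * S.dualImbalance κ p := by
  have := S.sum_sub_rev_mul f hκ
  rw [sum_congr rfl fun d _ => congrArg (· * κ d) (hf d), S.sum_boundary_mul β hκ] at this
  linarith

theorem sum_dualImbalance_eq_zero {κ : S.D → ℝ} (hκ : ∀ d, κ (S.rev d) = - κ d) :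
    ∑ p, S.dualImbalance κ p = 0 := by
  have h := S.sum_comp_rev_mul (fun _ => 1) hκ
  simp only [one_mul] at h
  simp only [dualImbalance, sum_fiberwise]
  linarith

variable {S}

theorem IsDrainage.sum_dualImbalance_ne_zero {z : S.D → ℝ} {r : S.F} (hz : S.IsDrainage z r)
    {A : Finset S.F} (hA : A.Nonempty) (hAc : Aᶜ.Nonempty) :
    ∑ p ∈ A, S.dualImbalance z p ≠ 0 := by
  have neg_of_not_mem : ∀ B : Finset S.F, B.Nonempty → r ∉ B →
      ∑ p ∈ B, S.dualImbalance z p < 0 := fun B hB hrB =>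
    sum_neg (fun p hp => hz.2 p (fun h => hrB (h ▸ hp))) hB
  by_cases hr : r ∈ A
  · have htot := sum_add_sum_compl A (S.dualImbalance z)
    rw [S.sum_dualImbalance_eq_zero hz.1] at htot
    have := neg_of_not_mem Aᶜ hAc (by simpa using hr)
    linarith
  · exact (neg_of_not_mem A hA hr).ne

theorem IsSpanningTree.isDartTree [Nonempty S.V] {A : Finset S.D} (hA : S.IsSpanningTree A) :
    IsDartTree S.rev S.head S.tail A univ where
  rev_mem := hA.1
  head_mem _ _ := mem_univ _
  connected p _ q _ := hA.2.1 p q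
  card_le := by rw [hA.2.2, card_univ]; have := Fintype.card_pos (α := S.V); omega

theorem IsSpanningCotree.isDartTree [Nonempty S.F] {A : Finset S.D}
    (hA : S.IsSpanningCotree A) : IsDartTree S.rev S.right S.left A univ where
  rev_mem := hA.1
  head_mem _ _ := mem_univ _
  connected p _ q _ := hA.2.1 p q
  card_le := by rw [hA.2.2, card_univ]; have := Fintype.card_pos (α := S.F); omega

theorem exists_isBoundary_of_support (h : S.D → ℝ) (β : S.F → ℝ)
    (hβ : ∀ d, β (S.left d) < β (S.right d) → h (S.rev d) < h d) :
    ∃ w : S.D → ℝ, S.IsBoundary w β ∧ ∀ d, w d ≠ 0 → h d ≠ 0 := by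
  set θ : S.D → ℝ := fun d => β (S.right d) - β (S.left d)
  have hθ : ∀ d, θ (S.rev d) = - θ d := fun d => by simp [θ, right, S.rev_invol]
  -- `θ d > 0` is carried by `d` if `h d > 0` and otherwise by `rev d`, where then `h (rev d) < 0`
  refine ⟨fun d => if 0 < θ d ∧ 0 < h d then θ d
    else if θ d < 0 ∧ h (S.rev d) ≤ 0 then θ d else 0, fun d => ?_, fun d hd => ?_⟩
  · show _ = θ d
    have := hθ d
    simp only [S.rev_invol]
    split_ifs <;> grind
  · dsimp only at hd
    split_ifs at hd with h1 h2
    · exact h1.2.ne'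
    · have := hβ (S.rev d) (by simpa [θ, right, S.rev_invol] using h2.1)
      rw [S.rev_invol] at this
      linarith
    · exact absurd rfl hd

theorem eq_zero_of_rev_eq_of_sum_eq_zero {h : S.D → ℝ} (hsym : ∀ d, h (S.rev d) = h d)
    (hvan : ∀ w, S.IsBoundary w 0 → (∀ d, w d ≠ 0 → h d ≠ 0) → ∑ d, w d = 0) : h = 0 := by
  by_contra hne
  obtain ⟨d₀, hd₀⟩ := Function.ne_iff.mp hne
  set E : Finset S.D := {d₀, S.rev d₀}
  have hE : ∀ d, S.rev d ∈ E ↔ d ∈ E := fun d => by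
    simp only [E, mem_insert, mem_singleton, S.rev_involutive.eq_iff, S.rev_invol]
    tauto
  have hsum := hvan (fun d => if d ∈ E then 1 else 0) (fun d => by simp [hE]) fun d hd => by
    have hdE : d ∈ E := by
      by_contra hdE
      simp [hdE] at hd
    rcases mem_insert.mp hdE with rfl | hdE
    · exact hd₀
    · rw [mem_singleton.mp hdE, hsym]
      exact hd₀
  rw [sum_boole, filter_mem_eq_inter, univ_inter, card_pair (S.rev_ne d₀).symm] at hsum
  norm_num at hsum

theorem IsDrainage.eq_of_isBoundary {z : S.D → ℝ} {r : S.F} (hz : S.IsDrainage z r)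
    {h : S.D → ℝ} {α : S.F → ℝ} (hα : S.IsBoundary h α)
    (hvan : ∀ w β, S.IsBoundary w β → (∀ d, w d ≠ 0 → h d ≠ 0) → ∑ d, w d * z d = 0)
    (p q : S.F) : α p = α q := by
  have : Nonempty S.F := ⟨p⟩
  obtain ⟨p₀, hp₀⟩ := Finite.exists_min α
  suffices hconst : ∀ p, α p = α p₀ by rw [hconst p, hconst q]
  by_contra! ⟨p₁, hp₁⟩
  set A : Finset S.F := univ.filter fun p => α p₀ < α p
  obtain ⟨w, hw, hws⟩ := S.exists_isBoundary_of_support h (fun p => if p ∈ A then 1 else 0)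
    fun d hd => by
      simp only [A, mem_filter, mem_univ, true_and] at hd
      split_ifs at hd <;> norm_num at hd
      linarith [hα d, hp₀ (S.left d)]
  have hsum := hvan w _ hw hws
  rw [S.sum_mul_of_isBoundary hw hz.1] at hsum
  refine hz.sum_dualImbalance_ne_zero (A := A) ⟨p₁, ?_⟩ ⟨p₀, by simp [A]⟩ ?_
  · simpa [A] using lt_of_le_of_ne (hp₀ p₁) (Ne.symm hp₁)
  · simpa [ite_mul, sum_ite_mem] using hsum

end CombSurface

namespace HomologyBasis

variable {S : CombSurface} (H : HomologyBasis S)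

theorem cyc_rev (i : Fin (2 * S.g)) (d : S.D) :
    (H.cyc i (S.rev d) : ℝ) = - (H.cyc i d : ℝ) := by
  rw [H.cyc_antisym, Int.cast_neg]

theorem dualImbalance_cyc (i : Fin (2 * S.g)) (p : S.F) :
    S.dualImbalance (fun d => (H.cyc i d : ℝ)) p = 0 := by
  rw [CombSurface.dualImbalance, ← Int.cast_sum, H.cyc_circ, Int.cast_zero]

/-- Pairing with the dual fundamental cycles reads off the values on the leftover edges, so `ρ`
lives on the tree. -/
theorem eq_zero_of_sum_mul_cyc_eq_zero {ρ : S.D → ℝ} (hρ : ∀ d, ρ (S.rev d) = - ρ d)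
    (hbal : ∀ v, ∑ d with S.head d = v, ρ d = 0) (hC : ∀ d ∈ H.C, ρ d = 0)
    (hcyc : ∀ i, ∑ d, ρ d * H.cyc i d = 0) : ρ = 0 := by
  rcases isEmpty_or_nonempty S.D with hD | ⟨⟨d₀⟩⟩
  · exact funext fun d => isEmptyElim d
  have : Nonempty S.V := ⟨S.head d₀⟩
  have hell : ∀ i, ρ (H.ell i) = 0 := by
    intro i
    have hsum : ∑ d, ρ d * H.cyc i d = 2 * ρ (H.ell i) := by
      rw [← sum_subset (subset_univ {H.ell i, S.rev (H.ell i)})]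
      · rw [sum_pair (S.rev_ne _).symm, hρ, H.cyc_rev, H.cyc_ell]
        push_cast
        ring
      · intro d _ hd
        by_cases hc : H.cyc i d = 0
        · simp [hc]
        · rcases H.cyc_supp i d hc with hdC | rfl | rfl
          · simp [hC d hdC]
          · simp at hd
          · simp at hd
    linarith [hcyc i]
  refine H.tree.isDartTree.eq_zero_of_balanced S.rev_involutive S.rev_ne (fun _ => rfl) hρ hbal
    fun d hd => ?_
  have : d ∈ H.T ∪ H.L ∪ H.C := H.cover ▸ mem_univ d
  rcases mem_union.mp this with hTL | hCd
  · rcases mem_union.mp hTL with hT | hL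
    · exact hT
    · obtain ⟨i, rfl | rfl⟩ := H.ell_cover d hL
      · exact absurd (hell i) hd
      · exact absurd (by rw [hρ, hell i, neg_zero]) hd
  · exact absurd (hC d hCd) hd

theorem exists_isBoundary {f : S.D → ℝ} (hf : ∀ v, S.imbalance f v = 0)
    (hcyc : ∀ i, ∑ d, f d * H.cyc i d = 0) : ∃ α, S.IsBoundary f α := by
  rcases isEmpty_or_nonempty S.D with hD | ⟨⟨d₀⟩⟩
  · exact ⟨0, fun d => isEmptyElim d⟩
  have : Nonempty S.F := ⟨S.left d₀⟩
  set θ : S.D → ℝ := fun d => f d - f (S.rev d)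
  have hθ : ∀ d, θ (S.rev d) = - θ d := fun d => by simp [θ, S.rev_invol]
  obtain ⟨α, hα⟩ := H.cotree.isDartTree.exists_potential S.rev_involutive S.rev_ne
    (fun d => (S.right_rev d).symm) θ hθ
  set ρ : S.D → ℝ := fun d => θ d - (α (S.right d) - α (S.left d))
  suffices ρ = 0 from ⟨α, fun d => sub_eq_zero.mp (congrFun this d)⟩
  refine H.eq_zero_of_sum_mul_cyc_eq_zero (fun d => ?_) (fun v => ?_) (fun d hd => ?_) (fun i => ?_)
  · simp only [ρ, hθ, CombSurface.right, S.rev_invol]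
    ring
  · rw [sum_sub_distrib, S.sum_head_boundary, ← S.imbalance_eq_sum_head, hf, sub_zero]
  · simp [ρ, hα d hd]
  · simp only [ρ, θ]
    rw [sum_congr rfl fun d _ => sub_mul _ _ _, sum_sub_distrib, S.sum_sub_rev_mul f (H.cyc_rev i),
      hcyc, S.sum_boundary_mul α (κ := fun d => (H.cyc i d : ℝ)) (H.cyc_rev i)]
    simp [H.dualImbalance_cyc]

end HomologyBasis

theorem lexLe_iff_toLex_le {n : ℕ} {a b : Fin n → ℝ} : lexLe a b ↔ toLex a ≤ toLex b := by
  rw [le_iff_lt_or_eq, toLex_inj]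
  rfl

theorem lexLe.apply_zero_le {n : ℕ} {a b : Fin (n + 1) → ℝ} (h : lexLe a b) : a 0 ≤ b 0 := by
  by_contra! h0
  have : toLex b < toLex a := ⟨0, fun j hj => absurd hj (Fin.not_lt_zero j), h0⟩
  exact this.not_ge (lexLe_iff_toLex_le.mp h)

theorem eq_zero_of_lexLe_add_of_lexLe_sub {n : ℕ} {u x : Fin n → ℝ} (h₁ : lexLe u (u + x))
    (h₂ : lexLe u (u - x)) : x = 0 := by
  rw [lexLe_iff_toLex_le, toLex_add] at h₁
  rw [lexLe_iff_toLex_le, toLex_sub] at h₂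
  exact toLex_inj.mp (le_antisymm ((le_sub_self_iff _).mp h₂) ((le_add_iff_nonneg_right _).mp h₁))

section FlowCost

variable {S : CombSurface} {H : HomologyBasis S} {z c : S.D → ℝ}

theorem flowCostFull_eq_linearCombination :
    flowCostFull S H z c = Fintype.linearCombination ℝ (dartCostFull S H z c) :=
  funext fun f => (Fintype.linearCombination_apply ℝ _ f).symm

theorem flowCostFull_apply (f : S.D → ℝ) (j : Fin (2 * S.g + 3)) :
    flowCostFull S H z c f j = ∑ d, f d * dartCostFull S H z c d j := by
  simp [flowCostFull]

theorem flowCostFull_zero (f : S.D → ℝ) : flowCostFull S H z c f 0 = ∑ d, f d * c d := by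
  simp [flowCostFull_apply, dartCostFull]

theorem flowCostFull_one (f : S.D → ℝ) : flowCostFull S H z c f 1 = ∑ d, f d := by
  rw [show (1 : Fin (2 * S.g + 3)) = Fin.succ 0 from rfl]
  simp [flowCostFull_apply, dartCostFull]

theorem flowCostFull_cyc (f : S.D → ℝ) (i : Fin (2 * S.g)) :
    flowCostFull S H z c f i.castSucc.succ.succ = ∑ d, f d * H.cyc i d := by
  simp [flowCostFull_apply, dartCostFull]

theorem flowCostFull_last (f : S.D → ℝ) :
    flowCostFull S H z c f (Fin.last _) = ∑ d, f d * z d := by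
  simp [flowCostFull_apply, dartCostFull, ← Fin.succ_last]

end FlowCost

section Perturbation

variable {S : CombSurface} {H : HomologyBasis S} {z c : S.D → ℝ} {μ : S.D → ENNReal}
  {b : S.V → ℝ} {f f' w : S.D → ℝ}

theorem eventually_midpoint_add_mul_mem_uIcc {x y a : ℝ} (h : a ≠ 0 → x ≠ y) :
    ∀ᶠ s in 𝓝 (0 : ℝ), 2⁻¹ * (x + y) + s * a ∈ Set.uIcc x y := by
  by_cases ha : a = 0
  · refine Filter.Eventually.of_forall fun s => ?_
    rw [ha, mul_zero, add_zero, Set.mem_uIcc]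
    rcases le_total x y with hle | hle
    · exact Or.inl ⟨by linarith, by linarith⟩
    · exact Or.inr ⟨by linarith, by linarith⟩
  have hlim : Tendsto (fun s => 2⁻¹ * (x + y) + s * a) (𝓝 0) (𝓝 (2⁻¹ * (x + y))) := by
    have : Continuous fun s : ℝ => 2⁻¹ * (x + y) + s * a := by fun_prop
    simpa using this.tendsto 0
  have hmid : 2⁻¹ * (x + y) ∈ Set.Ioo (min x y) (max x y) := by
    rcases lt_or_gt_of_ne (h ha) with hlt | hlt
    · simp only [min_eq_left hlt.le, max_eq_right hlt.le, Set.mem_Ioo]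
      constructor <;> linarith
    · simp only [min_eq_right hlt.le, max_eq_left hlt.le, Set.mem_Ioo]
      constructor <;> linarith
  exact (hlim.eventually (Ioo_mem_nhds hmid.1 hmid.2)).mono fun s hs => Set.Ioo_subset_Icc_self hs

theorem Feasible.eventually_midpoint_add_smul (hf : Feasible S μ b f) (hf' : Feasible S μ b f')
    (hw : ∀ v, S.imbalance w v = 0) (hsupp : ∀ d, w d ≠ 0 → f d ≠ f' d) :
    ∀ᶠ s in 𝓝 (0 : ℝ), Feasible S μ b ((2⁻¹ : ℝ) • (f + f') + s • w) := by
  have hcap : ∀ d, ∀ t ∈ Set.uIcc (f d) (f' d), 0 ≤ t ∧ ENNReal.ofReal t ≤ μ d := by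
    intro d t ht
    rcases le_total (f d) (f' d) with hle | hle
    · rw [Set.uIcc_of_le hle] at ht
      exact ⟨(hf.1 d).1.trans ht.1, (ENNReal.ofReal_le_ofReal ht.2).trans (hf'.1 d).2⟩
    · rw [Set.uIcc_of_ge hle] at ht
      exact ⟨(hf'.1 d).1.trans ht.1, (ENNReal.ofReal_le_ofReal ht.2).trans (hf.1 d).2⟩
  have hdart : ∀ d, ∀ᶠ s in 𝓝 (0 : ℝ), 2⁻¹ * (f d + f' d) + s * w d ∈ Set.uIcc (f d) (f' d) :=
    fun d => eventually_midpoint_add_mul_mem_uIcc (hsupp d)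
  filter_upwards [Filter.eventually_all.mpr hdart] with s hs
  refine ⟨fun d => hcap d _ (hs d), fun v => ?_⟩
  rw [S.imbalance_add, S.imbalance_smul, S.imbalance_smul, S.imbalance_add, hf.2, hf'.2, hw]
  ring

theorem IsMinCostFlow.flowCostFull_eq (hf : IsMinCostFlow S H z c μ b f)
    (hf' : IsMinCostFlow S H z c μ b f') : flowCostFull S H z c f' = flowCostFull S H z c f :=
  toLex_inj.mp (le_antisymm (lexLe_iff_toLex_le.mp (hf'.2 f hf.1))
    (lexLe_iff_toLex_le.mp (hf.2 f' hf'.1)))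

/-- Moving from the midpoint of two minimum-cost flows along a circulation `w` in either
direction stays feasible, so `w` must have zero perturbed cost. -/
theorem IsMinCostFlow.flowCostFull_eq_zero (hf : IsMinCostFlow S H z c μ b f)
    (hf' : IsMinCostFlow S H z c μ b f') (hw : ∀ v, S.imbalance w v = 0)
    (hsupp : ∀ d, w d ≠ 0 → f d ≠ f' d) : flowCostFull S H z c w = 0 := by
  have hcost : ∀ s : ℝ, flowCostFull S H z c ((2⁻¹ : ℝ) • (f + f') + s • w)
      = flowCostFull S H z c f + s • flowCostFull S H z c w := by
    intro s
    have hC := hf.flowCostFull_eq hf'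
    rw [flowCostFull_eq_linearCombination] at hC ⊢
    simp only [map_add, map_smul, hC]
    module
  have hfeas := hf.1.eventually_midpoint_add_smul hf'.1 hw hsupp
  have hpm : ∀ᶠ s in 𝓝[≠] (0 : ℝ), Feasible S μ b ((2⁻¹ : ℝ) • (f + f') + s • w) ∧
      Feasible S μ b ((2⁻¹ : ℝ) • (f + f') + (-s) • w) ∧ s ≠ 0 := by
    refine Filter.Eventually.and (nhdsWithin_le_nhds hfeas) (Filter.Eventually.and ?_
      self_mem_nhdsWithin)
    exact nhdsWithin_le_nhds ((continuous_neg.tendsto' 0 0 neg_zero).eventually hfeas)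
  obtain ⟨s, hs₁, hs₂, hs₀⟩ := hpm.exists
  have h₁ := hf.2 _ hs₁
  have h₂ := hf.2 _ hs₂
  rw [hcost] at h₁
  rw [hcost, neg_smul, ← sub_eq_add_neg] at h₂
  exact (smul_eq_zero.mp (eq_zero_of_lexLe_add_of_lexLe_sub h₁ h₂)).resolve_left hs₀

end Perturbation

theorem eq_of_isMinCostFlow {S : CombSurface} {H : HomologyBasis S} {z : S.D → ℝ} {r : S.F}
    (hz : S.IsDrainage z r) {c : S.D → ℝ} {μ : S.D → ENNReal} {b : S.V → ℝ} {f f' : S.D → ℝ}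
    (hf : IsMinCostFlow S H z c μ b f) (hf' : IsMinCostFlow S H z c μ b f') : f' = f := by
  set h := f' - f
  have hvan : ∀ w, (∀ v, S.imbalance w v = 0) → (∀ d, w d ≠ 0 → h d ≠ 0) →
      flowCostFull S H z c w = 0 := fun w hw hws =>
    hf.flowCostFull_eq_zero hf' hw fun d hd => (sub_ne_zero.mp (hws d hd)).symm
  have hcirc : ∀ v, S.imbalance h v = 0 := fun v => by
    rw [S.imbalance_sub, hf.1.2, hf'.1.2, sub_self]
  obtain ⟨α, hα⟩ := H.exists_isBoundary hcirc fun i => by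
    rw [← flowCostFull_cyc (z := z) (c := c), hvan h hcirc fun _ => id, Pi.zero_apply]
  have hconst := hz.eq_of_isBoundary hα fun w β hw hws => by
    rw [← flowCostFull_last (H := H) (c := c),
      hvan w (S.imbalance_eq_zero_of_isBoundary hw) hws, Pi.zero_apply]
  have hsym : ∀ d, h (S.rev d) = h d := fun d => by
    linarith [hα d, hconst (S.right d) (S.left d)]
  refine (sub_eq_zero.mp (S.eq_zero_of_rev_eq_of_sum_eq_zero hsym fun w hw hws => ?_))
  rw [← flowCostFull_one (H := H) (z := z) (c := c),
    hvan w (S.imbalance_eq_zero_of_isBoundary hw) hws, Pi.zero_apply]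

/-- Theorem 1 of the paper.  Let `c : darts → ℝ` be a dart cost
function, let `c'` be its lexicographic perturbation (defined from homology signatures
and a drainage `z` with sink `r`), and let `μ` and `b` be dart capacity and vertex demand
functions.  If a minimum-cost feasible flow with respect to `c'`, `μ`, and `b` exists,
then it is unique, and it is also a minimum-cost feasible flow with respect to the
unperturbed costs `c`. -/
theorem holiest_unique_flow (S : CombSurface) (H : HomologyBasis S) (z : S.D → ℝ)
    (r : S.F) (hz : S.IsDrainage z r) (c : S.D → ℝ) (μ : S.D → ENNReal) (b : S.V → ℝ)
    (f : S.D → ℝ) (hf : IsMinCostFlow S H z c μ b f) :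
    (∀ f', IsMinCostFlow S H z c μ b f' → f' = f) ∧
      (∀ f', Feasible S μ b f' → (∑ d, f d * c d) ≤ ∑ d, f' d * c d) :=
  ⟨fun _ hf' => eq_of_isMinCostFlow hz hf hf', fun f' hf' => by
    simpa only [flowCostFull_zero] using (hf.2 f' hf').apply_zero_le⟩
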